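/- arXiv:hep-th/9309029 — 2 statements merged into one kernel-verified Lean document; each statement's English description precedes it below -/
import Mathlib

section
/- Let q be generic (not a root of unity) or let all expressions be in the field of rational functions. Define the q-binomial [p choose z]_q = [p; z]!/[z]! for complex p and nonnegative integer z, where [p; z]! = ∏_{k=0}^{z-1} [p-k]_q. The vector v = ∑_{z_1=0}^{n} (-1)^{z_1} q^{-z_1(p_3+1)} [2p_1 - z_1 choose n - z_1]_q [2p_2 - (n - z_1) choose z_1]_q (f^{z_1} ⊗ f^{n-z_1}) (v_1 ⊗ v_2), where p_3 = p_1 + p_2 - n and e v_i = 0 (i = 1, 2), satisfies Δ(e) v = 0, where Δ(e) = e ⊗ k + k^{-1} ⊗ e. -/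
open TensorProduct

/-- The q-integer `[m]_q = (q^m - q^{-m})/(q - q^{-1})` for an integer `m`. -/
noncomputable def qint (q : ℂ) (m : ℤ) : ℂ := (q ^ m - q ^ (-m)) / (q - q⁻¹)

/-- The falling q-factorial `[p; n]! = ∏_{k=0}^{n-1} [p-k]_q`. -/
noncomputable def qfact (q : ℂ) (p : ℤ) (n : ℕ) : ℂ :=
  ∏ k ∈ Finset.range n, qint q (p - k)

/-- The q-binomial coefficient `[p choose z]_q = [p; z]!/[z]!`. -/
noncomputable def qbinom (q : ℂ) (p : ℤ) (z : ℕ) : ℂ :=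
  qfact q p z / ∏ j ∈ Finset.range z, qint q (j + 1)

section Aux

variable {q : ℂ}

lemma hd_ne (hq0 : q ≠ 0) (hq2 : q ^ 2 ≠ 1) : q - q⁻¹ ≠ 0 := by
  intro h
  have hq : q = q⁻¹ := sub_eq_zero.mp h
  apply hq2
  rw [sq]
  nth_rewrite 2 [hq]
  exact mul_inv_cancel₀ hq0

lemma qint_zero' : qint q 0 = 0 := by simp [qint]

lemma qint_one (hq0 : q ≠ 0) (hq2 : q ^ 2 ≠ 1) : qint q 1 = 1 := by
  simp only [qint, zpow_one, zpow_neg, zpow_one]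
  exact div_self (hd_ne hq0 hq2)

lemma d_mul_qint (hd : q - q⁻¹ ≠ 0) (m : ℤ) :
    (q - q⁻¹) * qint q m = q ^ m - q ^ (-m) := by
  rw [qint, mul_comm, div_mul_cancel₀ _ hd]

lemma qint_eq_zero_of (hq0 : q ≠ 0) (m : ℤ) (h : q ^ (2 * m) = 1) : qint q m = 0 := by
  have h2 : q ^ m * q ^ m = 1 := by
    rw [← zpow_add₀ hq0]; rw [← h]; congr 1; ring
  have h3 : q ^ (-m) = q ^ m := by
    rw [zpow_neg]
    exact inv_eq_of_mul_eq_one_left h2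
  simp [qint, h3]

lemma qint_zero_imp (hq0 : q ≠ 0) (hq2 : q ^ 2 ≠ 1) (m : ℤ) (h : qint q m = 0) :
    q ^ (2 * m) = 1 := by
  have hnum : q ^ m - q ^ (-m) = 0 := by
    rcases div_eq_zero_iff.mp h with h' | h'
    · exact h'
    · exact absurd h' (hd_ne hq0 hq2)
  have h1 : q ^ m = q ^ (-m) := sub_eq_zero.mp hnum
  calc q ^ (2 * m) = q ^ m * q ^ m := by rw [← zpow_add₀ hq0]; congr 1; ring
  _ = q ^ m * q ^ (-m) := by rw [h1]
  _ = 1 := by rw [← zpow_add₀ hq0]; simp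

lemma qint_rec (hq0 : q ≠ 0) (hq2 : q ^ 2 ≠ 1) (a b : ℤ) :
    qint q (a + 1) * qint q b = qint q a * qint q (b + 1) + qint q (b - a) := by
  have ha : q ^ a ≠ 0 := zpow_ne_zero _ hq0
  have hb : q ^ b ≠ 0 := zpow_ne_zero _ hq0
  have hd := hd_ne hq0 hq2
  have hz : (q ^ (a+1) - q ^ (-(a+1))) * (q ^ b - q ^ (-b))
      = (q ^ a - q ^ (-a)) * (q ^ (b+1) - q ^ (-(b+1)))
        + (q - q⁻¹) * (q ^ (b-a) - q ^ (-(b-a))) := by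
    simp only [zpow_add₀ hq0, zpow_sub₀ hq0, zpow_neg, zpow_one, neg_add, neg_sub]
    field_simp
    ring
  apply mul_left_cancel₀ (mul_ne_zero hd hd)
  calc (q - q⁻¹) * (q - q⁻¹) * (qint q (a + 1) * qint q b)
      = ((q - q⁻¹) * qint q (a+1)) * ((q - q⁻¹) * qint q b) := by ring
    _ = (q ^ (a+1) - q ^ (-(a+1))) * (q ^ b - q ^ (-b)) := by
        rw [d_mul_qint hd, d_mul_qint hd]
    _ = ((q - q⁻¹) * qint q a) * ((q - q⁻¹) * qint q (b+1))
        + (q - q⁻¹) * ((q - q⁻¹) * qint q (b-a)) := by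
        rw [d_mul_qint hd, d_mul_qint hd, d_mul_qint hd]; exact hz
    _ = (q - q⁻¹) * (q - q⁻¹) * (qint q a * qint q (b + 1) + qint q (b - a)) := by ring

lemma qfact_succ' (p : ℤ) (z : ℕ) :
    qfact q p (z + 1) = qint q p * qfact q (p - 1) z := by
  rw [qfact, Finset.prod_range_succ', qfact]
  have h0 : qint q (p - ((0 : ℕ) : ℤ)) = qint q p := by norm_num
  have hprod : (∏ k ∈ Finset.range z, qint q (p - ((k + 1 : ℕ) : ℤ)))
      = ∏ k ∈ Finset.range z, qint q ((p - 1) - (k : ℤ)) :=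
    Finset.prod_congr rfl fun k _ => by congr 1; push_cast; ring
  rw [h0, hprod, mul_comm]

lemma qfact_eq_zero (hq0 : q ≠ 0) (c : ℕ) (hc : 0 < c) (h1 : q ^ (2 * (c : ℤ)) = 1)
    (p : ℤ) : qfact q p c = 0 := by
  have hc0 : (0 : ℤ) < (c : ℤ) := by exact_mod_cast hc
  set k : ℕ := (p % (c : ℤ)).toNat with hk
  have hk1 : (k : ℤ) = p % (c : ℤ) := Int.toNat_of_nonneg (Int.emod_nonneg p hc0.ne')
  have hk2 : k < c := by
    have := Int.emod_lt_of_pos p hc0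
    omega
  apply Finset.prod_eq_zero (Finset.mem_range.mpr hk2)
  apply qint_eq_zero_of hq0
  have h3 : p - (k : ℤ) = (c : ℤ) * (p / (c : ℤ)) := by
    have := Int.emod_add_mul_ediv p (c : ℤ)
    rw [hk1]; linarith
  rw [show 2 * (p - (k : ℤ)) = (2 * (c : ℤ)) * (p / (c : ℤ)) from by rw [h3]; ring,
    zpow_mul, h1, one_zpow]

lemma key (hq0 : q ≠ 0) (hq2 : q ^ 2 ≠ 1) (a b : ℤ) (w m : ℕ) (hm : 0 < m) :
    qint q ((w : ℤ) + 1) * qint q (a - w) * qbinom q (a - ((w : ℤ) + 1)) (m - 1)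
      * qbinom q (b + 1) (w + 1)
    = qint q (m : ℤ) * qint q (b + 1) * qbinom q (a - w) m * qbinom q b w := by
  set u := qint q ((w : ℤ) + 1) with hu_def
  set vv := qint q (m : ℤ) with hvv_def
  set X := qfact q (a - ((w : ℤ) + 1)) (m - 1) with hX_def
  set Y := qfact q b w with hY_def
  set P := ∏ j ∈ Finset.range (m - 1), qint q (j + 1) with hP_def
  set Qd := ∏ j ∈ Finset.range w, qint q (j + 1) with hQ_def
  have hm1 : m = (m - 1) + 1 := (Nat.succ_pred_eq_of_pos hm).symm
  have hA : qfact q (a - w) m = qint q (a - w) * X := by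
    rw [hm1, qfact_succ', hX_def]
    congr 2
    ring
  have hB : qfact q (b + 1) (w + 1) = qint q (b + 1) * Y := by
    rw [qfact_succ', hY_def]
    congr 2
    ring
  have hDm : (∏ j ∈ Finset.range m, qint q (j + 1)) = P * vv := by
    rw [hm1, Finset.prod_range_succ, hP_def, hvv_def,
      show (((m - 1 : ℕ) : ℤ) + 1) = (m : ℤ) from by omega]
  have hDw1 : (∏ j ∈ Finset.range (w + 1), qint q (j + 1)) = Qd * u := by
    rw [Finset.prod_range_succ, hQ_def, hu_def]
  rw [qbinom, qbinom, qbinom, qbinom, hA, hB, hDm, hDw1, ← hX_def, ← hY_def, ← hP_def,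
    ← hQ_def]
  by_cases hu : u = 0
  · have h1 : q ^ (2 * ((w : ℤ) + 1)) = 1 := qint_zero_imp hq0 hq2 _ hu
    have hY0 : qint q (b + 1) * Y = 0 := by
      rw [← hB]
      apply qfact_eq_zero hq0 (w + 1) (Nat.succ_pos w) _ (b + 1)
      rw [show ((w + 1 : ℕ) : ℤ) = (w : ℤ) + 1 from by push_cast; ring]
      exact h1
    rw [hu]
    have h2 : vv * qint q (b + 1) * (qint q (a - (w : ℤ)) * X / (P * vv)) * (Y / Qd)
        = vv * (qint q (a - (w : ℤ)) * X / (P * vv)) * (qint q (b + 1) * Y / Qd) := by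
      ring
    rw [h2, hY0]
    simp
  · by_cases hv : vv = 0
    · have h1 : q ^ (2 * (m : ℤ)) = 1 := qint_zero_imp hq0 hq2 _ hv
      have hX0 : qint q (a - (w : ℤ)) * X = 0 := by
        rw [← hA]
        exact qfact_eq_zero hq0 m hm h1 _
      rw [hv]
      have h2 : u * qint q (a - (w : ℤ)) * (X / P) * (qint q (b + 1) * Y / (Qd * u))
          = u * (qint q (a - (w : ℤ)) * X / P) * (qint q (b + 1) * Y / (Qd * u)) := by
        ring
      rw [h2, hX0]
      simp
    · have h1 : u * qint q (a - (w : ℤ)) * (X / P) * (qint q (b + 1) * Y / (Qd * u))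
          = (u * u⁻¹) * (qint q (a - (w : ℤ)) * X * (qint q (b + 1) * Y) * (P⁻¹ * Qd⁻¹)) := by
        simp only [div_eq_mul_inv, mul_inv]
        ring
      have h2 : vv * qint q (b + 1) * (qint q (a - (w : ℤ)) * X / (P * vv)) * (Y / Qd)
          = (vv * vv⁻¹) * (qint q (a - (w : ℤ)) * X * (qint q (b + 1) * Y) * (P⁻¹ * Qd⁻¹)) := by
        simp only [div_eq_mul_inv, mul_inv]
        ring
      rw [h1, h2, mul_inv_cancel₀ hu, mul_inv_cancel₀ hv]

/-- The coefficient in the sum. -/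
noncomputable def Ccoef (q : ℂ) (p1 p2 : ℤ) (n z : ℕ) : ℂ :=
  (-1 : ℂ) ^ z * q ^ (-(z : ℤ) * (p1 + p2 - n + 1)) *
    qbinom q (2 * p1 - z) (n - z) * qbinom q (2 * p2 - ((n : ℤ) - z)) z

lemma S2' (hq0 : q ≠ 0) (hq2 : q ^ 2 ≠ 1) (p1 p2 : ℤ) (n w : ℕ) (hw : w < n) :
    Ccoef q p1 p2 n (w + 1) * (qint q ((w : ℤ) + 1) * qint q (2 * p1 - (w : ℤ)))
      * q ^ (p2 - ((n : ℤ) - ((w : ℤ) + 1)))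
    = -(Ccoef q p1 p2 n w * q ^ ((w : ℤ) - p1)
        * (qint q ((n : ℤ) - (w : ℤ)) * qint q (2 * p2 - (n : ℤ) + (w : ℤ) + 1))) := by
  obtain ⟨m, rfl⟩ : ∃ m, n = w + m := ⟨n - w, by omega⟩
  have hm : 0 < m := by omega
  simp only [Ccoef]
  rw [show (w + m) - (w + 1) = m - 1 from by omega]
  rw [show (w + m) - w = m from by omega]
  push_cast
  rw [show (w : ℤ) + (m : ℤ) - ((w : ℤ) + 1) = (m : ℤ) - 1 from by ring,
      show (w : ℤ) + (m : ℤ) - (w : ℤ) = (m : ℤ) from by ring,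
      show 2 * p2 - ((m : ℤ) - 1) = 2 * p2 - (m : ℤ) + 1 from by ring,
      show 2 * p2 - ((w : ℤ) + (m : ℤ)) + (w : ℤ) + 1 = 2 * p2 - (m : ℤ) + 1 from by ring]
  have hkey := key hq0 hq2 (2 * p1) (2 * p2 - (m : ℤ)) w m hm
  have hpow : q ^ (-((w : ℤ) + 1) * (p1 + p2 - ((w : ℤ) + (m : ℤ)) + 1))
        * q ^ (p2 - ((m : ℤ) - 1))
      = q ^ (-(w : ℤ) * (p1 + p2 - ((w : ℤ) + (m : ℤ)) + 1)) * q ^ ((w : ℤ) - p1) := by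
    rw [← zpow_add₀ hq0, ← zpow_add₀ hq0]
    congr 1
    ring
  calc (-1 : ℂ) ^ (w + 1) * q ^ (-((w : ℤ) + 1) * (p1 + p2 - ((w : ℤ) + (m : ℤ)) + 1))
          * qbinom q (2 * p1 - ((w : ℤ) + 1)) (m - 1)
          * qbinom q (2 * p2 - (m : ℤ) + 1) (w + 1)
          * (qint q ((w : ℤ) + 1) * qint q (2 * p1 - (w : ℤ)))
          * q ^ (p2 - ((m : ℤ) - 1))
      = (-1 : ℂ) ^ (w + 1)
          * (q ^ (-((w : ℤ) + 1) * (p1 + p2 - ((w : ℤ) + (m : ℤ)) + 1))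
            * q ^ (p2 - ((m : ℤ) - 1)))
          * (qint q ((w : ℤ) + 1) * qint q (2 * p1 - (w : ℤ))
            * qbinom q (2 * p1 - ((w : ℤ) + 1)) (m - 1)
            * qbinom q (2 * p2 - (m : ℤ) + 1) (w + 1)) := by ring
    _ = (-1 : ℂ) ^ (w + 1)
          * (q ^ (-(w : ℤ) * (p1 + p2 - ((w : ℤ) + (m : ℤ)) + 1)) * q ^ ((w : ℤ) - p1))
          * (qint q (m : ℤ) * qint q (2 * p2 - (m : ℤ) + 1)
            * qbinom q (2 * p1 - (w : ℤ)) m * qbinom q (2 * p2 - (m : ℤ)) w) := by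
        rw [hpow, hkey]
    _ = -((-1 : ℂ) ^ w * q ^ (-(w : ℤ) * (p1 + p2 - ((w : ℤ) + (m : ℤ)) + 1))
          * qbinom q (2 * p1 - (w : ℤ)) m * qbinom q (2 * p2 - (m : ℤ)) w
          * q ^ ((w : ℤ) - p1)
          * (qint q (m : ℤ) * qint q (2 * p2 - (m : ℤ) + 1))) := by
        rw [pow_succ]
        ring


variable {V : Type*} [AddCommGroup V] [Module ℂ V]

lemma Kpow (hq0 : q ≠ 0) (F K : V →ₗ[ℂ] V) (hKF : K ∘ₗ F = q⁻¹ • (F ∘ₗ K))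
    (p : ℤ) (v : V) (hv : K v = q ^ p • v) (z : ℕ) :
    K ((F ^ z) v) = q ^ (p - (z : ℤ)) • (F ^ z) v := by
  induction z with
  | zero => simpa using hv
  | succ z ih =>
    have h1 : (F ^ (z + 1)) v = F ((F ^ z) v) := by
      rw [pow_succ']; rfl
    rw [h1]
    have h2 := LinearMap.congr_fun hKF ((F ^ z) v)
    simp only [LinearMap.comp_apply, LinearMap.smul_apply] at h2
    rw [h2, ih, map_smul, smul_smul]
    congr 1
    rw [show p - ((z + 1 : ℕ) : ℤ) = (-1) + (p - (z : ℤ)) by push_cast; ring,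
      zpow_add₀ hq0, zpow_neg_one]

lemma Kipow (hq0 : q ≠ 0) (F K Ki : V →ₗ[ℂ] V) (hKF : K ∘ₗ F = q⁻¹ • (F ∘ₗ K))
    (hK' : Ki ∘ₗ K = LinearMap.id)
    (p : ℤ) (v : V) (hv : K v = q ^ p • v) (z : ℕ) :
    Ki ((F ^ z) v) = q ^ ((z : ℤ) - p) • (F ^ z) v := by
  have h := Kpow hq0 F K hKF p v hv z
  have h2 : Ki (K ((F ^ z) v)) = (F ^ z) v := LinearMap.congr_fun hK' _
  rw [h, map_smul] at h2
  have hne : q ^ (p - (z : ℤ)) ≠ 0 := zpow_ne_zero _ hq0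
  have h3 : Ki ((F ^ z) v) = (q ^ (p - (z : ℤ)))⁻¹ • (F ^ z) v := by
    rw [eq_inv_smul_iff₀ hne]
    exact h2
  rw [h3, ← zpow_neg, neg_sub]

lemma Epow (hq0 : q ≠ 0) (hq2 : q ^ 2 ≠ 1) (E F K Ki : V →ₗ[ℂ] V)
    (hKF : K ∘ₗ F = q⁻¹ • (F ∘ₗ K)) (hK' : Ki ∘ₗ K = LinearMap.id)
    (hEF : E ∘ₗ F - F ∘ₗ E = (q - q⁻¹)⁻¹ • (K ∘ₗ K - Ki ∘ₗ Ki))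
    (p : ℤ) (v : V) (hv : K v = q ^ p • v) (hve : E v = 0) (z : ℕ) :
    E ((F ^ (z + 1)) v) = (qint q ((z : ℤ) + 1) * qint q (2 * p - z)) • (F ^ z) v := by
  have hd := hd_ne hq0 hq2
  have step : ∀ w : ℕ, E ((F ^ (w + 1)) v)
      = F (E ((F ^ w) v)) + qint q (2 * (p - w)) • (F ^ w) v := by
    intro w
    have h1 : (F ^ (w + 1)) v = F ((F ^ w) v) := by rw [pow_succ']; rfl
    have h2 := LinearMap.congr_fun hEF ((F ^ w) v)
    simp only [LinearMap.sub_apply, LinearMap.comp_apply, LinearMap.smul_apply] at h2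
    have hK2 : K (K ((F ^ w) v)) = (q ^ (p - (w : ℤ)) * q ^ (p - (w : ℤ))) • (F ^ w) v := by
      rw [Kpow hq0 F K hKF p v hv w, map_smul, Kpow hq0 F K hKF p v hv w, smul_smul]
    have hKi2 : Ki (Ki ((F ^ w) v))
        = (q ^ ((w : ℤ) - p) * q ^ ((w : ℤ) - p)) • (F ^ w) v := by
      rw [Kipow hq0 F K Ki hKF hK' p v hv w, map_smul,
        Kipow hq0 F K Ki hKF hK' p v hv w, smul_smul]
    have h3 : E (F ((F ^ w) v)) - F (E ((F ^ w) v))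
        = (q - q⁻¹)⁻¹ • (K (K ((F ^ w) v)) - Ki (Ki ((F ^ w) v))) := by
      simpa using h2
    rw [h1]
    have h4 : (q - q⁻¹)⁻¹ • ((q ^ (p - (w : ℤ)) * q ^ (p - (w : ℤ))) • (F ^ w) v
        - (q ^ ((w : ℤ) - p) * q ^ ((w : ℤ) - p)) • (F ^ w) v)
        = qint q (2 * (p - w)) • (F ^ w) v := by
      rw [← sub_smul, smul_smul]
      congr 1
      rw [qint, ← zpow_add₀ hq0, ← zpow_add₀ hq0, div_eq_inv_mul]
      congr 2 <;> ring_nf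
    have h5 := sub_eq_iff_eq_add.mp h3
    rw [h5, hK2, hKi2, h4, add_comm]
  induction z with
  | zero =>
    rw [step 0, pow_zero, Module.End.one_apply, hve, map_zero, zero_add]
    congr 1
    rw [Nat.cast_zero, zero_add, qint_one hq0 hq2, one_mul]
    congr 1
    ring
  | succ z ih =>
    rw [step (z + 1), ih, map_smul]
    have h1 : F ((F ^ z) v) = (F ^ (z + 1)) v := by rw [pow_succ']; rfl
    rw [h1, ← add_smul]
    congr 1
    have h6 := qint_rec hq0 hq2 ((z : ℤ) + 1) (2 * p - (z : ℤ) - 1)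
    push_cast
    rw [show 2 * p - ((z : ℤ) + 1) = (2 * p - (z : ℤ) - 1) from by ring]
    rw [show ((z : ℤ) + 1 + 1) = ((z : ℤ) + 1) + 1 from by ring]
    rw [h6]
    congr 2
    · ring
    · ring

end Aux

/-- auxiliary telescoping sequence -/
noncomputable def Gaux (q : ℂ) (p1 p2 : ℤ) (n : ℕ) {V1 V2 : Type*}
    [AddCommGroup V1] [Module ℂ V1] [AddCommGroup V2] [Module ℂ V2]
    (F1 : V1 →ₗ[ℂ] V1) (F2 : V2 →ₗ[ℂ] V2) (v1 : V1) (v2 : V2) : ℕ → V1 ⊗[ℂ] V2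
  | 0 => 0
  | (w + 1) =>
    (Ccoef q p1 p2 n w * q ^ ((w : ℤ) - p1)
        * (qint q ((n : ℤ) - (w : ℤ)) * qint q (2 * p2 - (n : ℤ) + (w : ℤ) + 1))) •
      ((F1 ^ w) v1 ⊗ₜ[ℂ] (F2 ^ (n - (w + 1))) v2)

lemma Ccoef_eq (q : ℂ) (p1 p2 : ℤ) (n z : ℕ) :
    (-1 : ℂ) ^ z * q ^ (-(z : ℤ) * (p1 + p2 - n + 1)) *
      qbinom q (2 * p1 - z) (n - z) * qbinom q (2 * p2 - ((n : ℤ) - z)) z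
    = Ccoef q p1 p2 n z := rfl

/-- The vector `∑_{z₁=0}^n (-1)^{z₁} q^{-z₁(p₃+1)} [2p₁-z₁ ch n-z₁][2p₂-(n-z₁) ch z₁]
(f^{z₁} v₁) ⊗ (f^{n-z₁} v₂)` (with `p₃ = p₁+p₂-n`, `e vᵢ = 0`, `k vᵢ = q^{pᵢ} vᵢ`) is
annihilated by `Δ(e) = e ⊗ k + k⁻¹ ⊗ e`. -/
theorem stmt_10 (q : ℂ) (hq0 : q ≠ 0) (hq2 : q ^ 2 ≠ 1)
    (V1 V2 : Type*) [AddCommGroup V1] [Module ℂ V1] [AddCommGroup V2] [Module ℂ V2]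
    (E1 F1 K1 K1i : V1 →ₗ[ℂ] V1) (E2 F2 K2 K2i : V2 →ₗ[ℂ] V2)
    (hK1 : K1 ∘ₗ K1i = LinearMap.id) (hK1' : K1i ∘ₗ K1 = LinearMap.id)
    (hK2 : K2 ∘ₗ K2i = LinearMap.id) (hK2' : K2i ∘ₗ K2 = LinearMap.id)
    (hKE1 : K1 ∘ₗ E1 = q • (E1 ∘ₗ K1)) (hKF1 : K1 ∘ₗ F1 = q⁻¹ • (F1 ∘ₗ K1))
    (hKE2 : K2 ∘ₗ E2 = q • (E2 ∘ₗ K2)) (hKF2 : K2 ∘ₗ F2 = q⁻¹ • (F2 ∘ₗ K2))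
    (hEF1 : E1 ∘ₗ F1 - F1 ∘ₗ E1 = (q - q⁻¹)⁻¹ • (K1 ∘ₗ K1 - K1i ∘ₗ K1i))
    (hEF2 : E2 ∘ₗ F2 - F2 ∘ₗ E2 = (q - q⁻¹)⁻¹ • (K2 ∘ₗ K2 - K2i ∘ₗ K2i))
    (p1 p2 : ℤ) (n : ℕ)
    (v1 : V1) (v2 : V2)
    (hv1e : E1 v1 = 0) (hv1k : K1 v1 = (q ^ p1) • v1)
    (hv2e : E2 v2 = 0) (hv2k : K2 v2 = (q ^ p2) • v2) :
    (TensorProduct.map E1 K2 + TensorProduct.map K1i E2)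
      (∑ z1 ∈ Finset.range (n + 1),
        ((-1 : ℂ) ^ z1 * q ^ (-(z1 : ℤ) * (p1 + p2 - n + 1)) *
            qbinom q (2 * p1 - z1) (n - z1) *
            qbinom q (2 * p2 - ((n : ℤ) - z1)) z1) •
          ((F1 ^ z1) v1 ⊗ₜ[ℂ] (F2 ^ (n - z1)) v2)) = 0 := by
  simp only [Ccoef_eq]
  rw [map_sum]
  have hGtop : Gaux q p1 p2 n F1 F2 v1 v2 (n + 1) = 0 := by
    rw [Gaux, show ((n : ℤ) - (n : ℤ)) = 0 from by ring, qint_zero']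
    simp
  have hterm : ∀ z ∈ Finset.range (n + 1),
      (TensorProduct.map E1 K2 + TensorProduct.map K1i E2)
        (Ccoef q p1 p2 n z • ((F1 ^ z) v1 ⊗ₜ[ℂ] (F2 ^ (n - z)) v2))
      = Gaux q p1 p2 n F1 F2 v1 v2 (z + 1) - Gaux q p1 p2 n F1 F2 v1 v2 z := by
    intro z hz
    rw [Finset.mem_range] at hz
    have hzn : z ≤ n := by omega
    simp only [LinearMap.add_apply, map_smul, TensorProduct.map_tmul, smul_add]
    have h1 : Ccoef q p1 p2 n z • (E1 ((F1 ^ z) v1) ⊗ₜ[ℂ] K2 ((F2 ^ (n - z)) v2))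
        = -(Gaux q p1 p2 n F1 F2 v1 v2 z) := by
      match z, hzn with
      | 0, _ =>
        simp [hv1e, Gaux]
      | (w + 1), hzn =>
        rw [Epow hq0 hq2 E1 F1 K1 K1i hKF1 hK1' hEF1 p1 v1 hv1k hv1e w,
          Kpow hq0 F2 K2 hKF2 p2 v2 hv2k (n - (w + 1))]
        simp only [TensorProduct.smul_tmul', TensorProduct.tmul_smul, smul_smul]
        rw [Gaux, ← neg_smul,
          show ((n - (w + 1) : ℕ) : ℤ) = (n : ℤ) - ((w : ℤ) + 1) from by omega]
        have hsc : Ccoef q p1 p2 n (w + 1)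
              * (q ^ (p2 - ((n : ℤ) - ((w : ℤ) + 1)))
                * (qint q ((w : ℤ) + 1) * qint q (2 * p1 - (w : ℤ))))
            = -(Ccoef q p1 p2 n w * q ^ ((w : ℤ) - p1)
                * (qint q ((n : ℤ) - (w : ℤ)) * qint q (2 * p2 - (n : ℤ) + (w : ℤ) + 1))) := by
          linear_combination S2' hq0 hq2 p1 p2 n w (by omega)
        rw [hsc, TensorProduct.smul_tmul']
    have h2 : Ccoef q p1 p2 n z • (K1i ((F1 ^ z) v1) ⊗ₜ[ℂ] E2 ((F2 ^ (n - z)) v2))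
        = Gaux q p1 p2 n F1 F2 v1 v2 (z + 1) := by
      by_cases hz2 : z = n
      · subst hz2
        rw [hGtop]
        simp [Nat.sub_self, hv2e]
      · have hlt : z < n := by omega
        have hnz : n - z = (n - (z + 1)) + 1 := by omega
        rw [Kipow hq0 F1 K1 K1i hKF1 hK1' p1 v1 hv1k z, hnz,
          Epow hq0 hq2 E2 F2 K2 K2i hKF2 hK2' hEF2 p2 v2 hv2k hv2e (n - (z + 1))]
        simp only [TensorProduct.smul_tmul', TensorProduct.tmul_smul, smul_smul]
        rw [Gaux]
        congr 1
        rw [show ((n - (z + 1) : ℕ) : ℤ) + 1 = (n : ℤ) - (z : ℤ) from by omega,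
          show 2 * p2 - ((n - (z + 1) : ℕ) : ℤ) = 2 * p2 - (n : ℤ) + (z : ℤ) + 1 from by
            omega]
        ring
    rw [h1, h2]
    abel
  rw [Finset.sum_congr rfl hterm, Finset.sum_range_sub (Gaux q p1 p2 n F1 F2 v1 v2),
    hGtop]
  simp [Gaux]
end

section
/- Define the transpose dual π_p^*(a) = π_p^t(S(a)) with antipode S(e) = -q e, S(f) = -q^{-1} f, S(k) = k^{-1}. Let p̄ = N-1-p, and define the N×N matrix w by w_{ab} = (-q)^{-b} q^{-(N-1)p} δ_{N-1-a, b}. Then π_p^*(x) = w π_{p̄}(x) w^{-1} for x ∈ {e, f, k}, i.e., the dual of the nilpotent representation with parameter p is equivalent to the nilpotent representation with parameter N-1-p. -/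
open Matrix
/-- The q-integer `[m]_q = (q^m - q^{-m})/(q - q^{-1})` for a complex parameter `m`,
where `q^m` is the complex power (fixed branch). -/
noncomputable def qintc (q m : ℂ) : ℂ := (q ^ m - q ^ (-m)) / (q - q⁻¹)

/-- The matrix `π_p(e)_{ab} = ([2p-a][a+1])^{1/2} δ_{a+1,b}`. -/
noncomputable def Emat (sqrt : ℂ → ℂ) (q : ℂ) (N : ℕ) (p : ℂ) : Matrix (Fin N) (Fin N) ℂ :=
  fun a b => sqrt (qintc q (2 * p - (a : ℕ)) * qintc q ((a : ℕ) + 1)) *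
    (if (a : ℕ) + 1 = (b : ℕ) then 1 else 0)

/-- The matrix `π_p(f)_{ab} = ([2p-a+1][a])^{1/2} δ_{a-1,b}`. -/
noncomputable def Fmat (sqrt : ℂ → ℂ) (q : ℂ) (N : ℕ) (p : ℂ) : Matrix (Fin N) (Fin N) ℂ :=
  fun a b => sqrt (qintc q (2 * p - (a : ℕ) + 1) * qintc q (a : ℕ)) *
    (if (b : ℕ) + 1 = (a : ℕ) then 1 else 0)

/-- The matrix `π_p(k)_{ab} = q^{p-a} δ_{a,b}`. -/
noncomputable def Kmat (q : ℂ) (N : ℕ) (p : ℂ) : Matrix (Fin N) (Fin N) ℂ :=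
  fun a b => q ^ (p - (a : ℕ)) * (if a = b then 1 else 0)

/-- The matrix `π_p(k⁻¹)_{ab} = q^{-(p-a)} δ_{a,b}`. -/
noncomputable def Kinvmat (q : ℂ) (N : ℕ) (p : ℂ) : Matrix (Fin N) (Fin N) ℂ :=
  fun a b => q ^ (-(p - (a : ℕ))) * (if a = b then 1 else 0)

/-- The intertwiner `w_{ab} = (-q)^{-b} q^{-(N-1)p} δ_{N-1-a,b}`. -/
noncomputable def wmat (q : ℂ) (N : ℕ) (p : ℂ) : Matrix (Fin N) (Fin N) ℂ :=
  fun a b => (-q) ^ (-(b : ℤ)) * q ^ (-(((N : ℂ) - 1) * p)) *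
    (if (a : ℕ) + (b : ℕ) = N - 1 then 1 else 0)

noncomputable def wInv (q : ℂ) (N : ℕ) (p : ℂ) : Matrix (Fin N) (Fin N) ℂ :=
  fun a b => (-q) ^ ((a : ℕ) : ℤ) * q ^ (((N : ℂ) - 1) * p) *
    (if (a : ℕ) + (b : ℕ) = N - 1 then 1 else 0)

lemma rev_cond {N : ℕ} (a b : Fin N) : (a : ℕ) + (b : ℕ) = N - 1 ↔ b = Fin.rev a := by
  have ha := a.isLt; have hb := b.isLt
  constructor
  · intro h; apply Fin.ext; rw [Fin.val_rev]; omega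
  · rintro rfl; rw [Fin.val_rev]; omega

lemma conj_apply (q : ℂ) (N : ℕ) (p : ℂ) (M : Matrix (Fin N) (Fin N) ℂ) (a c : Fin N) :
    (wmat q N p * M * wInv q N p) a c =
      ((-q) ^ (-((Fin.rev a : ℕ) : ℤ)) * q ^ (-(((N : ℂ) - 1) * p))) *
        M (Fin.rev a) (Fin.rev c) *
      ((-q) ^ ((Fin.rev c : ℕ) : ℤ) * q ^ (((N : ℂ) - 1) * p)) := by
  rw [Matrix.mul_apply, Finset.sum_eq_single (Fin.rev c)]
  · rw [Matrix.mul_apply, Finset.sum_eq_single (Fin.rev a)]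
    · simp only [wmat, wInv, if_pos ((rev_cond a (Fin.rev a)).mpr rfl),
        if_pos ((rev_cond (Fin.rev c) c).mpr (Fin.rev_rev c).symm)]
      ring
    · intro b _ hb
      simp only [wmat]
      rw [if_neg (fun h => hb ((rev_cond a b).mp h)), mul_zero, zero_mul]
    · intro h; exact absurd (Finset.mem_univ _) h
  · intro d _ hd
    simp only [wInv]
    rw [if_neg (fun h => hd (by
      have := (rev_cond d c).mp h
      rw [this, Fin.rev_rev])), mul_zero, mul_zero]
  · intro h; exact absurd (Finset.mem_univ _) h

theorem stmt_15' (N : ℕ) (hN : 2 ≤ N) (q : ℂ) (hq : q ^ (2 * N) = 1)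
    (hprim : IsPrimitiveRoot (q ^ 2) N) (p : ℂ)
    (sqrt : ℂ → ℂ) (hsqrt : ∀ z : ℂ, sqrt z * sqrt z = z) :
    (-q) • (Emat sqrt q N p)ᵀ =
        wmat q N p * Emat sqrt q N ((N : ℂ) - 1 - p) * (wmat q N p)⁻¹ ∧
    (-q⁻¹) • (Fmat sqrt q N p)ᵀ =
        wmat q N p * Fmat sqrt q N ((N : ℂ) - 1 - p) * (wmat q N p)⁻¹ ∧
    (Kinvmat q N p)ᵀ =
        wmat q N p * Kmat q N ((N : ℂ) - 1 - p) * (wmat q N p)⁻¹ := by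
  have hq0 : q ≠ 0 := by
    intro h
    rw [h, zero_pow (by omega)] at hq
    exact zero_ne_one hq
  have hnq0 : (-q) ≠ 0 := neg_ne_zero.mpr hq0
  have hx0 : q ^ (((N : ℂ) - 1) * p) ≠ 0 := by
    intro h
    exact hq0 ((Complex.cpow_eq_zero_iff q _).mp h).1
  have hxx : q ^ (-(((N : ℂ) - 1) * p)) * q ^ (((N : ℂ) - 1) * p) = 1 := by
    rw [Complex.cpow_neg, inv_mul_cancel₀ hx0]
  have hε : q ^ ((N : ℕ) : ℂ) * q ^ ((N : ℕ) : ℂ) = 1 := by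
    rw [Complex.cpow_natCast, ← pow_add, ← two_mul, hq]
  have hεinv : (q ^ ((N : ℕ) : ℂ))⁻¹ = q ^ ((N : ℕ) : ℂ) :=
    inv_eq_of_mul_eq_one_right hε
  have qshift : ∀ y : ℂ, qintc q ((N : ℂ) + y) = q ^ ((N : ℕ) : ℂ) * qintc q y := by
    intro y
    unfold qintc
    rw [Complex.cpow_add _ _ hq0, neg_add,
      show (-(N : ℂ)) = -((N : ℕ) : ℂ) by push_cast; ring,
      Complex.cpow_add _ _ hq0, Complex.cpow_neg q ((N : ℕ) : ℂ), hεinv]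
    push_cast
    ring
  have qneg : ∀ y : ℂ, qintc q (-y) = - qintc q y := by
    intro y; unfold qintc; rw [neg_neg]; ring
  have hwinv : wmat q N p * wInv q N p = 1 := by
    ext a c
    rw [Matrix.mul_apply, Finset.sum_eq_single (Fin.rev a)]
    · simp only [wmat, wInv, if_pos ((rev_cond a (Fin.rev a)).mpr rfl)]
      by_cases hac : c = a
      · subst hac
        rw [if_pos ((rev_cond (Fin.rev c) c).mpr (Fin.rev_rev c).symm), Matrix.one_apply_eq]
        have h1 : (-q) ^ (-((Fin.rev c : ℕ) : ℤ)) * (-q) ^ ((Fin.rev c : ℕ) : ℤ) = 1 := by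
          rw [_root_.zpow_neg, inv_mul_cancel₀ (zpow_ne_zero _ hnq0)]
        linear_combination (q ^ (-(((N : ℂ) - 1) * p)) * q ^ (((N : ℂ) - 1) * p)) * h1 + hxx
      · rw [if_neg (fun h => hac (by
          have := (rev_cond (Fin.rev a) c).mp h
          rw [this, Fin.rev_rev])), Matrix.one_apply_ne' hac, mul_zero, mul_zero]
    · intro b _ hb
      simp only [wmat]
      rw [if_neg (fun h => hb ((rev_cond a b).mp h)), mul_zero, zero_mul]
    · intro h; exact absurd (Finset.mem_univ _) h
  rw [Matrix.inv_eq_right_inv hwinv]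
  have hrev : ∀ a : Fin N, ((Fin.rev a : ℕ) : ℂ) = (N : ℂ) - 1 - (a : ℕ) := by
    intro a
    rw [Fin.val_rev, Nat.cast_sub a.isLt]
    push_cast; ring
  refine ⟨?_, ?_, ?_⟩
  · -- E
    ext a c
    rw [Matrix.smul_apply, Matrix.transpose_apply, conj_apply]
    simp only [Emat, smul_eq_mul]
    by_cases h : (c : ℕ) + 1 = (a : ℕ)
    · have hδ : ((Fin.rev a : ℕ)) + 1 = ((Fin.rev c : ℕ)) := by
        rw [Fin.val_rev, Fin.val_rev]
        have := a.isLt; have := c.isLt; omega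
      have hz : ((Fin.rev c : ℕ) : ℤ) = ((Fin.rev a : ℕ) : ℤ) + 1 := by exact_mod_cast hδ.symm
      have hS : qintc q (2 * ((N : ℂ) - 1 - p) - ((Fin.rev a : ℕ) : ℂ)) *
          qintc q (((Fin.rev a : ℕ) : ℂ) + 1) =
          qintc q (2 * p - ((c : ℕ) : ℂ)) * qintc q (((c : ℕ) : ℂ) + 1) := by
        have hac : ((a : ℕ) : ℂ) = ((c : ℕ) : ℂ) + 1 := by exact_mod_cast h.symm
        rw [hrev a,
          show 2 * ((N : ℂ) - 1 - p) - ((N : ℂ) - 1 - ((a : ℕ) : ℂ)) =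
            (N : ℂ) + (((c : ℕ) : ℂ) - 2 * p) by rw [hac]; ring,
          show ((N : ℂ) - 1 - ((a : ℕ) : ℂ)) + 1 =
            (N : ℂ) + (-(((c : ℕ) : ℂ) + 1)) by rw [hac]; ring,
          qshift, qshift, qneg,
          show ((c : ℕ) : ℂ) - 2 * p = -(2 * p - ((c : ℕ) : ℂ)) by ring, qneg]
        linear_combination qintc q (2 * p - ((c : ℕ) : ℂ)) * qintc q (((c : ℕ) : ℂ) + 1) * hε
      rw [if_pos h, if_pos hδ, hS]
      have hzp : (-q) ^ (-((Fin.rev a : ℕ) : ℤ)) * (-q) ^ ((Fin.rev c : ℕ) : ℤ) = -q := by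
        rw [hz, ← zpow_add₀ hnq0,
          show -((Fin.rev a : ℕ) : ℤ) + (((Fin.rev a : ℕ) : ℤ) + 1) = 1 by ring, zpow_one]
      linear_combination
        (q * sqrt (qintc q (2 * p - ((c : ℕ) : ℂ)) * qintc q (((c : ℕ) : ℂ) + 1))) * hxx +
        (-(q ^ (-(((N : ℂ) - 1) * p)) * q ^ (((N : ℂ) - 1) * p) *
          sqrt (qintc q (2 * p - ((c : ℕ) : ℂ)) * qintc q (((c : ℕ) : ℂ) + 1)))) * hzp
    · have hδ : ¬ (((Fin.rev a : ℕ)) + 1 = ((Fin.rev c : ℕ))) := by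
        rw [Fin.val_rev, Fin.val_rev]
        have := a.isLt; have := c.isLt; omega
      rw [if_neg h, if_neg hδ]
      ring
  · -- F
    ext a c
    rw [Matrix.smul_apply, Matrix.transpose_apply, conj_apply]
    simp only [Fmat, smul_eq_mul]
    by_cases h : (a : ℕ) + 1 = (c : ℕ)
    · have hδ : ((Fin.rev c : ℕ)) + 1 = ((Fin.rev a : ℕ)) := by
        rw [Fin.val_rev, Fin.val_rev]
        have := a.isLt; have := c.isLt; omega
      have hz : ((Fin.rev a : ℕ) : ℤ) = ((Fin.rev c : ℕ) : ℤ) + 1 := by exact_mod_cast hδ.symm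
      have hS : qintc q (2 * ((N : ℂ) - 1 - p) - ((Fin.rev a : ℕ) : ℂ) + 1) *
          qintc q ((Fin.rev a : ℕ) : ℂ) =
          qintc q (2 * p - ((c : ℕ) : ℂ) + 1) * qintc q ((c : ℕ) : ℂ) := by
        have hac : ((c : ℕ) : ℂ) = ((a : ℕ) : ℂ) + 1 := by exact_mod_cast h.symm
        rw [hrev a,
          show 2 * ((N : ℂ) - 1 - p) - ((N : ℂ) - 1 - ((a : ℕ) : ℂ)) + 1 =
            (N : ℂ) + (-(2 * p - ((c : ℕ) : ℂ) + 1)) by rw [hac]; ring,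
          show ((N : ℂ) - 1 - ((a : ℕ) : ℂ)) =
            (N : ℂ) + (-((c : ℕ) : ℂ)) by rw [hac]; ring,
          qshift, qshift, qneg, qneg]
        linear_combination qintc q (2 * p - ((c : ℕ) : ℂ) + 1) * qintc q ((c : ℕ) : ℂ) * hε
      rw [if_pos h, if_pos hδ, hS]
      have hzp : (-q) ^ (-((Fin.rev a : ℕ) : ℤ)) * (-q) ^ ((Fin.rev c : ℕ) : ℤ) = -q⁻¹ := by
        rw [hz, ← zpow_add₀ hnq0,
          show -((((Fin.rev c : ℕ) : ℤ)) + 1) + ((Fin.rev c : ℕ) : ℤ) = -1 by ring,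
          _root_.zpow_neg_one, ← neg_inv]
      linear_combination
        (q⁻¹ * sqrt (qintc q (2 * p - ((c : ℕ) : ℂ) + 1) * qintc q ((c : ℕ) : ℂ))) * hxx +
        (-(q ^ (-(((N : ℂ) - 1) * p)) * q ^ (((N : ℂ) - 1) * p) *
          sqrt (qintc q (2 * p - ((c : ℕ) : ℂ) + 1) * qintc q ((c : ℕ) : ℂ)))) * hzp
    · have hδ : ¬ (((Fin.rev c : ℕ)) + 1 = ((Fin.rev a : ℕ))) := by
        rw [Fin.val_rev, Fin.val_rev]
        have := a.isLt; have := c.isLt; omega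
      rw [if_neg h, if_neg hδ]
      ring
  · -- K
    ext a c
    rw [Matrix.transpose_apply, conj_apply]
    simp only [Kinvmat, Kmat]
    by_cases h : a = c
    · subst h
      rw [if_pos (rfl : a = a), if_pos (rfl : Fin.rev a = Fin.rev a)]
      have hexp : (N : ℂ) - 1 - p - ((Fin.rev a : ℕ) : ℂ) = -(p - ((a : ℕ) : ℂ)) := by
        rw [hrev a]; ring
      rw [hexp]
      have hzp : (-q) ^ (-((Fin.rev a : ℕ) : ℤ)) * (-q) ^ ((Fin.rev a : ℕ) : ℤ) = 1 := by
        rw [← zpow_add₀ hnq0, neg_add_cancel, zpow_zero]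
      linear_combination
        (-(q ^ (-(p - ((a : ℕ) : ℂ))))) * hxx +
        (-(q ^ (-(p - ((a : ℕ) : ℂ))) * q ^ (-(((N : ℂ) - 1) * p)) *
          q ^ (((N : ℂ) - 1) * p))) * hzp
    · have h' : Fin.rev a ≠ Fin.rev c := fun hh => h (Fin.rev_injective hh)
      rw [if_neg (fun hh => h hh.symm), if_neg h', mul_zero, mul_zero, mul_zero, zero_mul]
/-- The dual `π_p^*(x) = π_p^t(S(x))` of the nilpotent representation with parameter `p`
is equivalent, via `w`, to the nilpotent representation with parameter `p̄ = N-1-p`: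
`π_p^*(x) = w π_{p̄}(x) w⁻¹` for `x ∈ {e, f, k}` (with `S(e) = -q e`, `S(f) = -q⁻¹ f`,
`S(k) = k⁻¹`). -/
theorem stmt_15 (N : ℕ) (hN : 2 ≤ N) (q : ℂ) (hq : q ^ (2 * N) = 1)
    (hprim : IsPrimitiveRoot (q ^ 2) N) (p : ℂ)
    (sqrt : ℂ → ℂ) (hsqrt : ∀ z : ℂ, sqrt z * sqrt z = z) :
    (-q) • (Emat sqrt q N p)ᵀ =
        wmat q N p * Emat sqrt q N ((N : ℂ) - 1 - p) * (wmat q N p)⁻¹ ∧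
    (-q⁻¹) • (Fmat sqrt q N p)ᵀ =
        wmat q N p * Fmat sqrt q N ((N : ℂ) - 1 - p) * (wmat q N p)⁻¹ ∧
    (Kinvmat q N p)ᵀ =
        wmat q N p * Kmat q N ((N : ℂ) - 1 - p) * (wmat q N p)⁻¹ :=
  stmt_15' N hN q hq hprim p sqrt hsqrt
end
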